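/- The broadcasting process is non-reconstructible on 𝕋 if and only if lim_{n→∞} x_{n;θ} = 0 and lim_{n→∞} x_{n;1−θ} = 0. -/

import Mathlib

open Finset Filter

namespace Broadcast

/-- The root distribution `π = (θ/2, θ/2, (1-θ)/2, (1-θ)/2)`. -/
noncomputable def rootDist (θ : ℝ) (i : Fin 4) : ℝ :=
  if (i : ℕ) < 2 then θ / 2 else (1 - θ) / 2

/-- The transition matrix `P i j = λ · 1{i=j} + (1-λ) π_j`. -/
noncomputable def trans (θ lam : ℝ) (i j : Fin 4) : ℝ :=
  (if i = j then lam else 0) + (1 - lam) * rootDist θ j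

/-- Vertices at level `n` of the infinite rooted `d`-ary tree, encoded as paths. -/
abbrev Vtx (d n : ℕ) := Fin n → Fin d

/-- Configurations (assignments of states) on level `n`. -/
abbrev Config (d n : ℕ) := Vtx d n → Fin 4

/-- Restriction of a level-`(n+1)` configuration to the subtree of the `j`-th child
of the root. -/
def restrict {d n : ℕ} (j : Fin d) (A : Config d (n + 1)) : Config d n :=
  fun p => A (Fin.cons j p)

/-- `lik θ λ d n i A` is the probability of observing the configuration `A` on level `n`,
given that the root is in state `i` (the broadcasting process). -/
noncomputable def lik (θ lam : ℝ) (d : ℕ) : (n : ℕ) → Fin 4 → Config d n → ℝ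
  | 0, i, A => if A Fin.elim0 = i then 1 else 0
  | n + 1, i, A =>
      ∏ j : Fin d, ∑ k : Fin 4, trans θ lam i k * lik θ lam d n k (restrict j A)

/-- Unconditional probability of observing the configuration `A` on level `n`. -/
noncomputable def marg (θ lam : ℝ) (d n : ℕ) (A : Config d n) : ℝ :=
  ∑ i : Fin 4, rootDist θ i * lik θ lam d n i A

/-- The posterior `f_n(i, A) = P(σ_ρ = i ∣ σ(n) = A)`. -/
noncomputable def post (θ lam : ℝ) (d n : ℕ) (i : Fin 4) (A : Config d n) : ℝ :=
  rootDist θ i * lik θ lam d n i A / marg θ lam d n A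

/-- Expectation of `g(σ(n))` conditioned on the root being in state `r`,
i.e. `E g(σ^r(n))`. -/
noncomputable def condE (θ lam : ℝ) (d n : ℕ) (r : Fin 4) (g : Config d n → ℝ) : ℝ :=
  ∑ A : Config d n, lik θ lam d n r A * g A

/-- Unconditional expectation of `g(σ(n))`. -/
noncomputable def uncondE (θ lam : ℝ) (d n : ℕ) (g : Config d n → ℝ) : ℝ :=
  ∑ A : Config d n, marg θ lam d n A * g A

/-- `x_{n;θ} = E f_n(1, σ¹(n)) - θ/2`. -/
noncomputable def xT (θ lam : ℝ) (d n : ℕ) : ℝ :=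
  condE θ lam d n 0 (fun A => post θ lam d n 0 A) - θ / 2

/-- `y_{n;θ} = E f_n(2, σ¹(n)) - θ/2`. -/
noncomputable def yT (θ lam : ℝ) (d n : ℕ) : ℝ :=
  condE θ lam d n 0 (fun A => post θ lam d n 1 A) - θ / 2

/-- `z_{n;θ} = E f_n(1, σ³(n)) - θ/2`. -/
noncomputable def zT (θ lam : ℝ) (d n : ℕ) : ℝ :=
  condE θ lam d n 2 (fun A => post θ lam d n 0 A) - θ / 2

/-- `x_{n;1-θ} = E f_n(3, σ³(n)) - (1-θ)/2`. -/
noncomputable def xH (θ lam : ℝ) (d n : ℕ) : ℝ :=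
  condE θ lam d n 2 (fun A => post θ lam d n 2 A) - (1 - θ) / 2

/-- `y_{n;1-θ} = E f_n(4, σ³(n)) - (1-θ)/2`. -/
noncomputable def yH (θ lam : ℝ) (d n : ℕ) : ℝ :=
  condE θ lam d n 2 (fun A => post θ lam d n 3 A) - (1 - θ) / 2

/-- `z_{n;1-θ} = E f_n(3, σ¹(n)) - (1-θ)/2`. -/
noncomputable def zH (θ lam : ℝ) (d n : ℕ) : ℝ :=
  condE θ lam d n 0 (fun A => post θ lam d n 2 A) - (1 - θ) / 2

/-- `u_{n;θ} = E (f_n(1, σ¹(n)) - θ/2)²`. -/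
noncomputable def uT (θ lam : ℝ) (d n : ℕ) : ℝ :=
  condE θ lam d n 0 (fun A => (post θ lam d n 0 A - θ / 2) ^ 2)

/-- `v_{n;θ} = E (f_n(2, σ¹(n)) - θ/2)²`. -/
noncomputable def vT (θ lam : ℝ) (d n : ℕ) : ℝ :=
  condE θ lam d n 0 (fun A => (post θ lam d n 1 A - θ / 2) ^ 2)

/-- `w_{n;θ} = E (f_n(1, σ³(n)) - θ/2)²`. -/
noncomputable def wT (θ lam : ℝ) (d n : ℕ) : ℝ :=
  condE θ lam d n 2 (fun A => (post θ lam d n 0 A - θ / 2) ^ 2)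

/-- `w_{n;1-θ} = E (f_n(3, σ¹(n)) - (1-θ)/2)²`. -/
noncomputable def wH (θ lam : ℝ) (d n : ℕ) : ℝ :=
  condE θ lam d n 0 (fun A => (post θ lam d n 2 A - (1 - θ) / 2) ^ 2)

/-- `Y_{ij}(n) = f_n(i, σ_j(n+1))`, viewed as a function of the level-`(n+1)`
configuration. -/
noncomputable def Yf (θ lam : ℝ) (d n : ℕ) (i : Fin 4) (j : Fin d)
    (A : Config d (n + 1)) : ℝ :=
  post θ lam d n i (restrict j A)

/-- `Z_i(n)`, viewed as a function of the level-`(n+1)` configuration. -/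
noncomputable def Zf (θ lam : ℝ) (d n : ℕ) (i : Fin 4) (A : Config d (n + 1)) : ℝ :=
  if (i : ℕ) < 2 then
    ∏ j : Fin d, (1 + (2 * lam / θ) * (Yf θ lam d n i j A - θ / 2))
  else
    ∏ j : Fin d, (1 + (2 * lam / (1 - θ)) * (Yf θ lam d n i j A - (1 - θ) / 2))

/-- `S = (θ/2)Z₁ + (θ/2)Z₂ + ((1-θ)/2)Z₃ + ((1-θ)/2)Z₄`. -/
noncomputable def Sf (θ lam : ℝ) (d n : ℕ) (A : Config d (n + 1)) : ℝ :=
  θ / 2 * Zf θ lam d n 0 A + θ / 2 * Zf θ lam d n 1 A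
    + (1 - θ) / 2 * Zf θ lam d n 2 A + (1 - θ) / 2 * Zf θ lam d n 3 A

/-- Total variation distance between the laws of `σ^i(n)` and `σ^j(n)`. -/
noncomputable def dTV (θ lam : ℝ) (d n : ℕ) (i j : Fin 4) : ℝ :=
  (∑ A : Config d n, |lik θ lam d n i A - lik θ lam d n j A|) / 2

/-- The model is reconstructible if for some pair of root states the total variation
distance between the conditioned level-`n` configurations does not vanish. -/
def Reconstructible (θ lam : ℝ) (d : ℕ) : Prop :=
  ∃ i j : Fin 4, 0 < Filter.limsup (fun n => dTV θ lam d n i j) Filter.atTop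

/-- Probability that the root is in state `i` and the states at the vertices
`v 1, …, v k ∈ L(M)` are `c 1, …, c k`. -/
noncomputable def jointRootEvent (θ lam : ℝ) (d M k : ℕ) (v : Fin k → Vtx d M)
    (c : Fin k → Fin 4) (i : Fin 4) : ℝ :=
  ∑ A : Config d M,
    if ∀ t, A (v t) = c t then rootDist θ i * lik θ lam d M i A else 0

/-- Conditional probability `P(σ_ρ = i ∣ σ_{v t} = c t, 1 ≤ t ≤ k)`. -/
noncomputable def condRoot (θ lam : ℝ) (d M k : ℕ) (v : Fin k → Vtx d M)
    (c : Fin k → Fin 4) (i : Fin 4) : ℝ :=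
  jointRootEvent θ lam d M k v c i / ∑ i' : Fin 4, jointRootEvent θ lam d M k v c i'

end Broadcast

/-!
Work in a finite Bayesian model with prior `π > 0`, likelihoods `L i`, mixture
`m = ∑ π_i L_i` and posteriors `f_i = π_i L_i / m`, and put `x_i = E_{L_i} f_i - π_i`.
Then `m (f_i - π_i) = π_i (L_i - m)` and `E_m (f_i - π_i)² = π_i x_i`. As `|f_i - π_i| ≤ 1`,
this gives `x_i ≤ ‖L_i - m‖₁ ≤ ∑_j π_j ‖L_i - L_j‖₁`, and Cauchy–Schwarz gives
`π_i ‖L_i - m‖₁² ≤ x_i`. Hence all `x_i` tend to `0` iff all total variation distances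
between the laws of the `σ^i(n)` tend to `0`. Finally the transpositions `1 ↔ 2` and `3 ↔ 4`
preserve `π` and `P`, so `x_1 = x_2 = x_{n;θ}` and `x_3 = x_4 = x_{n;1-θ}`.
-/

open Topology

namespace FiniteBayes

variable {ι α : Type*} [Fintype ι] [Fintype α]

noncomputable def mixture (π : ι → ℝ) (L : ι → α → ℝ) (A : α) : ℝ :=
  ∑ i, π i * L i A

noncomputable def posterior (π : ι → ℝ) (L : ι → α → ℝ) (i : ι) (A : α) : ℝ :=
  π i * L i A / mixture π L A

noncomputable def posteriorExcess (π : ι → ℝ) (L : ι → α → ℝ) (i : ι) : ℝ :=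
  ∑ A, L i A * posterior π L i A - π i

noncomputable def l1Dist (μ ν : α → ℝ) : ℝ :=
  ∑ A, |μ A - ν A|

structure IsModel (π : ι → ℝ) (L : ι → α → ℝ) : Prop where
  prior_pos : ∀ i, 0 < π i
  sum_prior : ∑ i, π i = 1
  lik_nonneg : ∀ i A, 0 ≤ L i A
  sum_lik : ∀ i, ∑ A, L i A = 1

variable {π : ι → ℝ} {L : ι → α → ℝ}

lemma l1Dist_nonneg (μ ν : α → ℝ) : 0 ≤ l1Dist μ ν :=
  sum_nonneg fun _ _ => abs_nonneg _

lemma l1Dist_le_add (μ ν ρ : α → ℝ) : l1Dist μ ν ≤ l1Dist μ ρ + l1Dist ν ρ := by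
  rw [l1Dist, l1Dist, l1Dist, ← sum_add_distrib]
  exact sum_le_sum fun A _ => (abs_sub_le _ (ρ A) _).trans_eq (by rw [abs_sub_comm (ρ A)])

namespace IsModel

lemma l1Dist_le_two (h : IsModel π L) (i j : ι) : l1Dist (L i) (L j) ≤ 2 :=
  calc l1Dist (L i) (L j) ≤ ∑ A, (L i A + L j A) :=
        sum_le_sum fun A _ => (abs_sub _ _).trans_eq <| by
          rw [abs_of_nonneg (h.lik_nonneg i A), abs_of_nonneg (h.lik_nonneg j A)]
    _ = 2 := by rw [sum_add_distrib, h.sum_lik, h.sum_lik]; norm_num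

lemma prior_le_one (h : IsModel π L) (i : ι) : π i ≤ 1 :=
  h.sum_prior ▸ single_le_sum (fun j _ => (h.prior_pos j).le) (mem_univ i)

lemma mixture_nonneg (h : IsModel π L) (A : α) : 0 ≤ mixture π L A :=
  sum_nonneg fun i _ => mul_nonneg (h.prior_pos i).le (h.lik_nonneg i A)

lemma sum_mixture (h : IsModel π L) : ∑ A, mixture π L A = 1 := by
  simp only [mixture]
  rw [sum_comm]
  simp_rw [← mul_sum, h.sum_lik, mul_one, h.sum_prior]

lemma prior_mul_lik_le_mixture (h : IsModel π L) (i : ι) (A : α) :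
    π i * L i A ≤ mixture π L A :=
  single_le_sum (f := fun j => π j * L j A)
    (fun j _ => mul_nonneg (h.prior_pos j).le (h.lik_nonneg j A)) (mem_univ i)

lemma mixture_mul_posterior (h : IsModel π L) (i : ι) (A : α) :
    mixture π L A * posterior π L i A = π i * L i A := by
  rcases (h.mixture_nonneg A).eq_or_lt with hm | hm
  · have := h.prior_mul_lik_le_mixture i A
    have := mul_nonneg (h.prior_pos i).le (h.lik_nonneg i A)
    rw [← hm, zero_mul]
    linarith
  · exact mul_div_cancel₀ _ hm.ne'

lemma posterior_nonneg (h : IsModel π L) (i : ι) (A : α) : 0 ≤ posterior π L i A :=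
  div_nonneg (mul_nonneg (h.prior_pos i).le (h.lik_nonneg i A)) (h.mixture_nonneg A)

lemma posterior_le_one (h : IsModel π L) (i : ι) (A : α) : posterior π L i A ≤ 1 :=
  div_le_one_of_le₀ (h.prior_mul_lik_le_mixture i A) (h.mixture_nonneg A)

lemma abs_posterior_sub_prior_le_one (h : IsModel π L) (i : ι) (A : α) :
    |posterior π L i A - π i| ≤ 1 := by
  have := h.posterior_nonneg i A
  have := h.posterior_le_one i A
  have := h.prior_pos i
  have := h.prior_le_one i
  exact abs_sub_le_iff.2 ⟨by linarith, by linarith⟩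

lemma mixture_mul_abs_posterior_sub_prior (h : IsModel π L) (i : ι) (A : α) :
    mixture π L A * |posterior π L i A - π i| = π i * |L i A - mixture π L A| := by
  have hmul : mixture π L A * (posterior π L i A - π i) = π i * (L i A - mixture π L A) := by
    rw [mul_sub, h.mixture_mul_posterior]
    ring
  simpa only [abs_mul, abs_of_nonneg (h.mixture_nonneg A), abs_of_pos (h.prior_pos i)]
    using congrArg abs hmul

lemma sum_mixture_mul_sq_posterior_sub_prior (h : IsModel π L) (i : ι) :
    ∑ A, mixture π L A * (posterior π L i A - π i) ^ 2 = π i * posteriorExcess π L i := by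
  have expand : ∀ A, mixture π L A * (posterior π L i A - π i) ^ 2
      = π i * (L i A * posterior π L i A) - 2 * π i * (mixture π L A * posterior π L i A)
        + π i ^ 2 * mixture π L A := fun A => by
    linear_combination (posterior π L i A) * h.mixture_mul_posterior i A
  simp_rw [expand, sum_add_distrib, sum_sub_distrib, ← mul_sum, h.mixture_mul_posterior,
    ← mul_sum, h.sum_lik, h.sum_mixture, posteriorExcess]
  ring

lemma posteriorExcess_nonneg (h : IsModel π L) (i : ι) : 0 ≤ posteriorExcess π L i := by
  have hsum := h.sum_mixture_mul_sq_posterior_sub_prior i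
  have : 0 ≤ ∑ A, mixture π L A * (posterior π L i A - π i) ^ 2 :=
    sum_nonneg fun A _ => mul_nonneg (h.mixture_nonneg A) (sq_nonneg _)
  exact nonneg_of_mul_nonneg_right (hsum ▸ this) (h.prior_pos i)

lemma posteriorExcess_le_l1Dist_mixture (h : IsModel π L) (i : ι) :
    posteriorExcess π L i ≤ l1Dist (L i) (mixture π L) := by
  refine le_of_mul_le_mul_left ?_ (h.prior_pos i)
  calc π i * posteriorExcess π L i
      = ∑ A, mixture π L A * (posterior π L i A - π i) ^ 2 :=
        (h.sum_mixture_mul_sq_posterior_sub_prior i).symm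
    _ ≤ ∑ A, mixture π L A * |posterior π L i A - π i| := by
        refine sum_le_sum fun A _ => mul_le_mul_of_nonneg_left ?_ (h.mixture_nonneg A)
        rw [← sq_abs]
        exact pow_le_of_le_one (abs_nonneg _) (h.abs_posterior_sub_prior_le_one i A) two_ne_zero
    _ = π i * l1Dist (L i) (mixture π L) := by
        simp_rw [h.mixture_mul_abs_posterior_sub_prior, l1Dist, mul_sum]

lemma l1Dist_mixture_le (h : IsModel π L) (i : ι) :
    l1Dist (L i) (mixture π L) ≤ ∑ j, π j * l1Dist (L i) (L j) := by
  have hdiff : ∀ A, L i A - mixture π L A = ∑ j, π j * (L i A - L j A) := fun A => by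
    simp_rw [mul_sub, sum_sub_distrib, ← sum_mul, h.sum_prior, one_mul, mixture]
  calc l1Dist (L i) (mixture π L) ≤ ∑ A, ∑ j, π j * |L i A - L j A| := by
        refine sum_le_sum fun A _ => ?_
        rw [hdiff]
        refine (abs_sum_le_sum_abs _ _).trans_eq (sum_congr rfl fun j _ => ?_)
        rw [abs_mul, abs_of_pos (h.prior_pos j)]
    _ = ∑ j, π j * l1Dist (L i) (L j) := by
        rw [sum_comm]; simp_rw [l1Dist, mul_sum]

lemma prior_mul_sq_l1Dist_mixture_le (h : IsModel π L) (i : ι) :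
    π i * l1Dist (L i) (mixture π L) ^ 2 ≤ posteriorExcess π L i := by
  refine le_of_mul_le_mul_left ?_ (h.prior_pos i)
  calc π i * (π i * l1Dist (L i) (mixture π L) ^ 2)
      = (∑ A, mixture π L A * |posterior π L i A - π i|) ^ 2 := by
        simp_rw [h.mixture_mul_abs_posterior_sub_prior, ← mul_sum, l1Dist]; ring
    _ ≤ (∑ A, mixture π L A) * ∑ A, mixture π L A * (posterior π L i A - π i) ^ 2 :=
        sum_sq_le_sum_mul_sum_of_sq_le_mul _ (fun A _ => h.mixture_nonneg A)
          (fun A _ => mul_nonneg (h.mixture_nonneg A) (sq_nonneg _))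
          (fun A _ => by rw [mul_pow, sq_abs]; ring_nf; rfl)
    _ = π i * posteriorExcess π L i := by
        rw [h.sum_mixture, one_mul, h.sum_mixture_mul_sq_posterior_sub_prior]

end IsModel

lemma posteriorExcess_eq_of_invariant (s : Equiv.Perm ι) (e : Equiv.Perm α)
    (hπ : ∀ i, π (s i) = π i) (hL : ∀ i A, L (s i) (e A) = L i A) (i : ι) :
    posteriorExcess π L (s i) = posteriorExcess π L i := by
  have hmix : ∀ A, mixture π L (e A) = mixture π L A := fun A => by
    rw [mixture, ← Equiv.sum_comp s]
    simp_rw [hπ, hL, mixture]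
  rw [posteriorExcess, ← Equiv.sum_comp e, posteriorExcess, hπ]
  simp_rw [posterior, hmix, hπ, hL]

theorem tendsto_l1Dist_iff_tendsto_posteriorExcess {α : ℕ → Type*} [∀ n, Fintype (α n)]
    {L : ∀ n, ι → α n → ℝ} (h : ∀ n, IsModel π (L n)) :
    (∀ i j, Tendsto (fun n => l1Dist (L n i) (L n j)) atTop (𝓝 0)) ↔
      ∀ i, Tendsto (fun n => posteriorExcess π (L n) i) atTop (𝓝 0) := by
  constructor
  · intro hdist i
    have hbound : Tendsto (fun n => ∑ j, π j * l1Dist (L n i) (L n j)) atTop (𝓝 0) := by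
      simpa using tendsto_finsetSum univ fun j _ => (hdist i j).const_mul (π j)
    exact squeeze_zero (fun n => (h n).posteriorExcess_nonneg i)
      (fun n => ((h n).posteriorExcess_le_l1Dist_mixture i).trans ((h n).l1Dist_mixture_le i))
      hbound
  · intro hexcess
    have hmix : ∀ i, Tendsto (fun n => l1Dist (L n i) (mixture π (L n))) atTop (𝓝 0) := by
      intro i
      have hpos := (h 0).prior_pos i
      have hsqrt : Tendsto (fun n => √(posteriorExcess π (L n) i / π i)) atTop (𝓝 0) := by
        simpa using ((hexcess i).div_const (π i)).sqrt
      refine squeeze_zero (fun n => l1Dist_nonneg _ _) (fun n => ?_) hsqrt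
      rw [Real.le_sqrt (l1Dist_nonneg _ _) (div_nonneg ((h n).posteriorExcess_nonneg i) hpos.le),
        le_div_iff₀ hpos, mul_comm]
      exact (h n).prior_mul_sq_l1Dist_mixture_le i
    intro i j
    exact squeeze_zero (fun n => l1Dist_nonneg _ _) (fun n => l1Dist_le_add _ _ _)
      (by simpa using (hmix i).add (hmix j))

end FiniteBayes

lemma limsup_nonpos_iff_tendsto_zero {β : Type*} {f : Filter β} [f.NeBot] {u : β → ℝ}
    {C : ℝ}
    (h0 : ∀ x, 0 ≤ u x) (hC : ∀ x, u x ≤ C) :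
    limsup u f ≤ 0 ↔ Tendsto u f (𝓝 0) := by
  refine ⟨fun hsup => tendsto_of_le_liminf_of_limsup_le ?_ hsup
    (isBoundedUnder_of ⟨C, hC⟩) (isBoundedUnder_of ⟨0, h0⟩),
    fun ht => ht.limsup_eq.le⟩
  exact le_liminf_of_le (isBoundedUnder_of ⟨C, hC⟩).isCoboundedUnder_ge
    (Eventually.of_forall h0)

namespace Broadcast

open FiniteBayes

variable {θ lam : ℝ} {d : ℕ}

lemma rootDist_pos (hθ : θ ∈ Set.Ioo (0 : ℝ) 1) (i : Fin 4) : 0 < rootDist θ i := by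
  obtain ⟨h0, h1⟩ := hθ
  unfold rootDist
  split_ifs <;> linarith

lemma sum_rootDist (θ : ℝ) : ∑ i, rootDist θ i = 1 := by
  norm_num [Fin.sum_univ_four, rootDist]
  ring

lemma sum_trans (θ lam : ℝ) (i : Fin 4) : ∑ j, trans θ lam i j = 1 := by
  simp [trans, sum_add_distrib, ← mul_sum, sum_rootDist]

lemma lik_nonneg (hP : ∀ i j : Fin 4, 0 ≤ trans θ lam i j) (n : ℕ) (i : Fin 4)
    (A : Config d n) : 0 ≤ lik θ lam d n i A := by
  induction n generalizing i with
  | zero => unfold lik; split_ifs <;> norm_num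
  | succ n ih =>
    exact prod_nonneg fun j _ => sum_nonneg fun k _ => mul_nonneg (hP i k) (ih k _)

def configSuccEquiv (d n : ℕ) : Config d (n + 1) ≃ (Fin d → Config d n) where
  toFun A j := restrict j A
  invFun B p := B (p 0) (Fin.tail p)
  left_inv A := funext fun p => by simp [restrict, Fin.cons_self_tail]
  right_inv B := funext fun j => funext fun p => by simp [restrict, Fin.tail_cons]

lemma sum_prod_restrict {n : ℕ} (F : Fin d → Config d n → ℝ) :
    ∑ A : Config d (n + 1), ∏ j, F j (restrict j A) = ∏ j, ∑ B : Config d n, F j B := by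
  rw [prod_univ_sum, Fintype.piFinset_univ]
  exact Fintype.sum_equiv (configSuccEquiv d n) _ _ fun A => rfl

lemma sum_lik (θ lam : ℝ) (d n : ℕ) (i : Fin 4) :
    ∑ A : Config d n, lik θ lam d n i A = 1 := by
  induction n generalizing i with
  | zero =>
    rw [← Fintype.sum_equiv (Equiv.funUnique (Vtx d 0) (Fin 4)).symm
      (fun c => if c = i then (1 : ℝ) else 0) _ fun c => rfl]
    simp
  | succ n ih =>
    simp only [lik]
    rw [sum_prod_restrict fun _ B => ∑ k, trans θ lam i k * lik θ lam d n k B]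
    refine prod_eq_one fun j _ => ?_
    rw [sum_comm]
    simp_rw [← mul_sum, ih, mul_one, sum_trans]

lemma isModel_lik (hθ : θ ∈ Set.Ioo (0 : ℝ) 1) (hP : ∀ i j : Fin 4, 0 ≤ trans θ lam i j)
    (n : ℕ) : IsModel (rootDist θ) (lik θ lam d n) :=
  ⟨rootDist_pos hθ, sum_rootDist θ, lik_nonneg hP n, sum_lik θ lam d n⟩

lemma lik_perm (s : Equiv.Perm (Fin 4)) (hs : ∀ i, rootDist θ (s i) = rootDist θ i)
    (n : ℕ) (i : Fin 4) (A : Config d n) :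
    lik θ lam d n (s i) (fun p => s (A p)) = lik θ lam d n i A := by
  induction n generalizing i with
  | zero => simp [lik]
  | succ n ih =>
    refine prod_congr rfl fun j _ => ?_
    rw [← Equiv.sum_comp s]
    refine sum_congr rfl fun k _ => ?_
    simp only [trans, hs, s.apply_eq_iff_eq]
    exact congrArg _ (ih k (restrict j A))

lemma posteriorExcess_lik_eq_of_rootDist_eq {i j : Fin 4} (hij : rootDist θ i = rootDist θ j)
    (n : ℕ) :
    posteriorExcess (rootDist θ) (lik θ lam d n) i
      = posteriorExcess (rootDist θ) (lik θ lam d n) j := by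
  have hs : ∀ k, rootDist θ (Equiv.swap j i k) = rootDist θ k := fun k => by
    rw [Equiv.swap_apply_def]
    split_ifs <;> simp_all
  simpa using posteriorExcess_eq_of_invariant (Equiv.swap j i)
    (Equiv.piCongrRight fun _ => Equiv.swap j i) hs (lik_perm _ hs n) j

lemma xT_eq_posteriorExcess (n : ℕ) :
    xT θ lam d n = posteriorExcess (rootDist θ) (lik θ lam d n) 0 := rfl

lemma xH_eq_posteriorExcess (n : ℕ) :
    xH θ lam d n = posteriorExcess (rootDist θ) (lik θ lam d n) 2 := rfl

lemma dTV_eq_l1Dist_div_two (n : ℕ) (i j : Fin 4) :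
    dTV θ lam d n i j = l1Dist (lik θ lam d n i) (lik θ lam d n j) / 2 := rfl

lemma not_reconstructible_iff (hθ : θ ∈ Set.Ioo (0 : ℝ) 1)
    (hP : ∀ i j : Fin 4, 0 ≤ trans θ lam i j) :
    ¬ Reconstructible θ lam d ↔
      ∀ i j, Tendsto (fun n => l1Dist (lik θ lam d n i) (lik θ lam d n j)) atTop (𝓝 0) := by
  simp only [Reconstructible, not_exists, not_lt, dTV_eq_l1Dist_div_two]
  refine forall₂_congr fun i j => ?_
  rw [limsup_nonpos_iff_tendsto_zero (C := 1)
    (fun n => div_nonneg (l1Dist_nonneg _ _) zero_le_two) fun n => ?_]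
  · exact ⟨fun h => by simpa [mul_div_cancel₀] using h.const_mul 2,
      fun h => by simpa using h.div_const 2⟩
  · exact (div_le_one two_pos).2 ((isModel_lik hθ hP n).l1Dist_le_two i j)

theorem nonreconstruction_iff_general (θ lam : ℝ) (hθ : θ ∈ Set.Ioo (0 : ℝ) 1)
    (hP : ∀ i j : Fin 4, 0 ≤ trans θ lam i j) (d : ℕ) :
    ¬ Reconstructible θ lam d ↔
      (Filter.Tendsto (fun n => xT θ lam d n) Filter.atTop (nhds 0) ∧
       Filter.Tendsto (fun n => xH θ lam d n) Filter.atTop (nhds 0)) := by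
  rw [not_reconstructible_iff hθ hP,
    tendsto_l1Dist_iff_tendsto_posteriorExcess (isModel_lik hθ hP)]
  simp only [xT_eq_posteriorExcess, xH_eq_posteriorExcess]
  refine ⟨fun h => ⟨h 0, h 2⟩, fun ⟨h0, h2⟩ i => ?_⟩
  obtain hi | hi : rootDist θ i = rootDist θ 0 ∨ rootDist θ i = rootDist θ 2 := by
    fin_cases i <;> simp [rootDist]
  · simpa only [posteriorExcess_lik_eq_of_rootDist_eq hi] using h0
  · simpa only [posteriorExcess_lik_eq_of_rootDist_eq hi] using h2

/-- The broadcasting process is non-reconstructible if and only if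
`x_{n;θ} → 0` and `x_{n;1-θ} → 0`. -/
theorem nonreconstruction_iff (θ lam : ℝ) (hθ : θ ∈ Set.Ioo (0 : ℝ) 1) (hlam : |lam| ≤ 1)
    (hP : ∀ i j : Fin 4, 0 ≤ trans θ lam i j) (d : ℕ) (hd : 2 ≤ d) :
    ¬ Reconstructible θ lam d ↔
      (Filter.Tendsto (fun n => xT θ lam d n) Filter.atTop (nhds 0) ∧
       Filter.Tendsto (fun n => xH θ lam d n) Filter.atTop (nhds 0)) :=
  nonreconstruction_iff_general θ lam hθ hP d

end Broadcast
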